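/- Let Γ be a countable group and (X,μ) a standard probability space whose measure is not a single point mass. Assume the Bernoulli shift Γ ↷ (X^Γ, μ^Γ) is L-cocycle superrigid for some nontrivial Polish group L admitting a compatible bi-invariant metric. Then Γ has at most one end; that is, every subset S ⊆ Γ such that γS △ S is finite for every γ ∈ Γ is either finite or has finite complement in Γ. -/

import Mathlib

/-!  Common definitions: wreath products, measured group actions, orbit equivalence,
measure equivalence, measurable splittings, cocycle superrigidity, and cofinitely
equivariant maps.  -/

open MeasureTheory Function Filter Set
open scoped ENNReal

namespace OEW


/-! ### Restricted direct sums and wreath products of groups -/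

/-- The restricted direct sum `⊕_V B`: the subgroup of `V → B` consisting of finitely
supported functions (support = coordinates where the value is not `1`). -/
def dsum (V B : Type) [Group B] : Subgroup (V → B) where
  carrier := {f | (Function.mulSupport f).Finite}
  one_mem' := by
    simp
  mul_mem' := fun {f g} hf hg =>
    Set.Finite.subset (Set.Finite.union hf hg) (Function.mulSupport_mul f g)
  inv_mem' := fun {f} hf => by simpa [Function.mulSupport_inv] using hf

variable {V B Γ : Type}

/-- The shift of a finitely supported function by `γ`. -/
def shiftSubtype [Group B] [Group Γ] [MulAction Γ V] (γ : Γ) (f : dsum V B) : dsum V B :=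
  ⟨fun v => (f : V → B) (γ⁻¹ • v), by
    have h : (Function.mulSupport fun v => (f : V → B) (γ⁻¹ • v)) ⊆
        (fun v => γ⁻¹ • v) ⁻¹' Function.mulSupport (f : V → B) := fun v hv => hv
    exact Set.Finite.subset
      (Set.Finite.preimage ((MulAction.injective (γ⁻¹ : Γ)).injOn) f.2) h⟩

/-- The shift by `γ` as an automorphism of the restricted direct sum. -/
def shiftEquiv [Group B] [Group Γ] [MulAction Γ V] (γ : Γ) : dsum V B ≃* dsum V B where
  toFun := shiftSubtype γ
  invFun := shiftSubtype γ⁻¹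
  left_inv f := Subtype.ext (funext fun v => by simp [shiftSubtype])
  right_inv f := Subtype.ext (funext fun v => by simp [shiftSubtype])
  map_mul' f g := rfl

/-- The left shift action of `Γ` on `⊕_V B` as a homomorphism into the automorphism group. -/
def shiftHom (V B Γ : Type) [Group B] [Group Γ] [MulAction Γ V] :
    Γ →* MulAut (dsum V B) where
  toFun γ := shiftEquiv γ
  map_one' := MulEquiv.ext fun f => Subtype.ext (funext fun v => by
    simp [shiftEquiv, shiftSubtype])
  map_mul' γ₁ γ₂ := MulEquiv.ext fun f => Subtype.ext (funext fun v => by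
    simp [shiftEquiv, shiftSubtype, mul_smul] <;> rfl)

/-- The (restricted) permutational wreath product `B ≀_V Γ = (⊕_V B) ⋊ Γ`. -/
abbrev pwreath (V B Γ : Type) [Group B] [Group Γ] [MulAction Γ V] : Type :=
  SemidirectProduct (dsum V B) Γ (shiftHom V B Γ)

/-- The (restricted) regular wreath product `B ≀ Γ = (⊕_Γ B) ⋊ Γ`. -/
abbrev wreath (B Γ : Type) [Group B] [Group Γ] : Type := pwreath Γ B Γ


/-- The shift ("generalized Bernoulli") action on `V → X`. -/
def shiftS [Group Γ] [MulAction Γ V] (γ : Γ) (x : V → X) : V → X :=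
  fun v => x (γ⁻¹ • v)

variable {V B C Γ X Y Z : Type}

/-- The wreath product action: given an action `β : B → X → X`, the induced action of the
wreath product `B ≀_V Γ` on `V → X`. -/
def wreathSmul [Group B] [Group Γ] [MulAction Γ V] (β : B → X → X)
    (g : pwreath V B Γ) (x : V → X) : V → X :=
  fun v => β ((g.left : V → B) v) (x (g.right⁻¹ • v))

/-- The coordinatewise action of the restricted direct sum `⊕_V B` on `V → X`. -/
def dsumSmul [Group B] (β : B → X → X) (b : dsum V B) (x : V → X) : V → X :=
  fun v => β ((b : V → B) v) (x v)

/-! ### Measured group actions, given by explicit action maps -/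

/-- `a` is a measure preserving group action of `G` on `(X, μ)`. -/
def IsMpAction {G : Type} [Group G] [MeasurableSpace X] (a : G → X → X) (μ : Measure X) : Prop :=
  (∀ x, a 1 x = x) ∧ (∀ g h x, a (g * h) x = a g (a h x)) ∧ ∀ g, MeasurePreserving (a g) μ μ

/-- A probability measure preserving (p.m.p.) action. -/
def IsPmpAction {G : Type} [Group G] [MeasurableSpace X] (a : G → X → X) (μ : Measure X) : Prop :=
  IsProbabilityMeasure μ ∧ IsMpAction a μ

/-- The action is (essentially) free. -/
def IsFreeAction {G : Type} [Group G] [MeasurableSpace X] (a : G → X → X) (μ : Measure X) : Prop :=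
  ∀ᵐ x ∂μ, ∀ g : G, a g x = x → g = 1

/-- The action is ergodic: every invariant measurable set is null or conull. -/
def IsErgodicAction {G : Type} [Group G] [MeasurableSpace X] (a : G → X → X) (μ : Measure X) :
    Prop :=
  ∀ A : Set X, MeasurableSet A → (∀ g : G, a g ⁻¹' A = A) → μ A = 0 ∨ μ Aᶜ = 0

/-- The action is totally ergodic: every infinite subgroup acts ergodically. -/
def IsTotallyErgodic {G : Type} [Group G] [MeasurableSpace X] (a : G → X → X) (μ : Measure X) :
    Prop :=
  ∀ H : Subgroup G, (H : Set G).Infinite → IsErgodicAction (fun (h : H) x => a (h : G) x) μ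

/-- `φ` is a measure space isomorphism from `(X,μ)` to `(Y,ν)`: a measure preserving
measurable map admitting an a.e. two-sided measurable inverse. -/
def IsMeasureIso [MeasurableSpace X] [MeasurableSpace Y] (μ : Measure X) (ν : Measure Y)
    (φ : X → Y) : Prop :=
  MeasurePreserving φ μ ν ∧
    ∃ ψ : Y → X, Measurable ψ ∧ (∀ᵐ x ∂μ, ψ (φ x) = x) ∧ (∀ᵐ y ∂ν, φ (ψ y) = y)

/-- `φ` is an orbit equivalence between the actions `a : G → X → X` and `b : H → Y → Y`:
a measure space isomorphism with `φ(G⬝x) = H⬝φ(x)` for a.e. `x`. -/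
def IsOrbitEquivalence {G H : Type} [MeasurableSpace X] [MeasurableSpace Y]
    (a : G → X → X) (b : H → Y → Y) (μ : Measure X) (ν : Measure Y) (φ : X → Y) : Prop :=
  IsMeasureIso μ ν φ ∧
    ∀ᵐ x ∂μ, (∀ g : G, ∃ h : H, φ (a g x) = b h (φ x)) ∧
      (∀ h : H, ∃ g : G, b h (φ x) = φ (a g x))

/-- The two actions are orbit equivalent. -/
def OrbitEquivalentActions {G H : Type} [MeasurableSpace X] [MeasurableSpace Y]
    (a : G → X → X) (b : H → Y → Y) (μ : Measure X) (ν : Measure Y) : Prop :=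
  ∃ φ : X → Y, IsOrbitEquivalence a b μ ν φ

/-- `m` is the product, over the index set `ι`, of copies of the probability measure `ν`. -/
def IsProductMeasure {ι : Type} [MeasurableSpace X] (ν : Measure X) (m : Measure (ι → X)) :
    Prop :=
  IsProbabilityMeasure m ∧
    ∀ (s : Finset ι) (A : ι → Set X), (∀ i, MeasurableSet (A i)) →
      m {x | ∀ i ∈ s, x i ∈ A i} = ∏ i ∈ s, ν (A i)

/-- A group is amenable if it admits a left translation invariant, finitely additive
probability measure defined on all of its subsets. -/
def IsAmenable (G : Type) [Group G] : Prop :=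
  ∃ m : Set G → ℝ,
    (∀ A : Set G, 0 ≤ m A) ∧ m Set.univ = 1 ∧
    (∀ A B : Set G, Disjoint A B → m (A ∪ B) = m A + m B) ∧
    ∀ (g : G) (A : Set G), m ((g * ·) '' A) = m A

/-! ### Bundled p.m.p. actions on standard probability spaces -/

/-- A p.m.p. action of `G` on a standard probability space, bundled. -/
structure PmpSystem (G : Type) [Group G] : Type 1 where
  (X : Type)
  [mX : MeasurableSpace X]
  (μ : Measure X)
  (act : G → X → X)
  (standardBorel : StandardBorelSpace X)
  (isProb : IsProbabilityMeasure μ)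
  (pmp : IsMpAction act μ)

/-- The bundled action is (essentially) free. -/
def PmpSystem.Free {G : Type} [Group G] (S : PmpSystem G) : Prop :=
  ∀ᵐ x ∂S.μ, ∀ g : G, S.act g x = x → g = 1

/-- The bundled action is ergodic. -/
def PmpSystem.ErgodicAct {G : Type} [Group G] (S : PmpSystem G) : Prop :=
  ∀ A : Set S.X, MeasurableSet[S.mX] A → (∀ g : G, S.act g ⁻¹' A = A) → S.μ A = 0 ∨ S.μ Aᶜ = 0

/-- Two countable groups are orbit equivalent if they admit orbit equivalent free ergodic
p.m.p. actions on standard probability spaces. -/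
def GroupsOrbitEquivalent (G H : Type) [Group G] [Group H] : Prop :=
  ∃ (S : PmpSystem G) (T : PmpSystem H),
    letI := S.mX
    letI := T.mX
    S.Free ∧ T.Free ∧ S.ErgodicAct ∧ T.ErgodicAct ∧
      OrbitEquivalentActions S.act T.act S.μ T.μ

/-! ### Measure equivalence -/

/-- `s` is a measurable fundamental domain for the action `a` on `(Ω, m)`. -/
def IsFundDomain {G Ω : Type} [MeasurableSpace Ω] (a : G → Ω → Ω) (s : Set Ω)
    (m : Measure Ω) : Prop :=
  MeasurableSet s ∧ (∀ᵐ x ∂m, ∃ g : G, a g x ∈ s) ∧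
    ∀ g g' : G, g ≠ g' → m (a g '' s ∩ a g' '' s) = 0

/-- A measure equivalence coupling of `G` with `H`: commuting measure preserving actions on
a standard nonzero σ-finite measure space, each admitting a finite measure measurable
fundamental domain. -/
structure MECoupling (G H : Type) [Group G] [Group H] : Type 1 where
  (Ω : Type)
  [mΩ : MeasurableSpace Ω]
  (m : Measure Ω)
  (aG : G → Ω → Ω)
  (aH : H → Ω → Ω)
  (standardBorel : StandardBorelSpace Ω)
  (sigmaFinite : SigmaFinite m)
  (nonzero : m ≠ 0)
  (mpG : IsMpAction aG m)
  (mpH : IsMpAction aH m)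
  (comm : ∀ (g : G) (h : H) (x : Ω), aG g (aH h x) = aH h (aG g x))
  (FG : Set Ω)
  (FH : Set Ω)
  (fundG : IsFundDomain aG FG m)
  (fundH : IsFundDomain aH FH m)
  (finG : m FG < ⊤)
  (finH : m FH < ⊤)

/-- `G` and `H` are measure equivalent. -/
def MeasureEquivalent (G H : Type) [Group G] [Group H] : Prop :=
  Nonempty (MECoupling G H)

/-- `G` and `H` admit a measure equivalence coupling of coupling index `α`
(the ratio of the measures of the `H`- and `G`-fundamental domains). -/
def MeasureEquivalentWithIndex (G H : Type) [Group G] [Group H] (α : ℝ≥0∞) : Prop :=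
  ∃ c : MECoupling G H, c.m c.FH = α * c.m c.FG



variable {X : Type}

/-! ### Countable Borel equivalence relations and measurable splittings -/

/-- `R` is a p.m.p. countable Borel equivalence relation on `(X, μ)`: every Borel bijection
between Borel subsets whose graph is contained in `R` preserves `μ`. -/
def IsPmpCBER [MeasurableSpace X] (R : X → X → Prop) (μ : Measure X) : Prop :=
  Equivalence R ∧ MeasurableSet {p : X × X | R p.1 p.2} ∧ (∀ x, {y | R x y}.Countable) ∧
    ∀ (f : X → X) (A B : Set X), Measurable f → MeasurableSet A → MeasurableSet B →
      Set.BijOn f A B → (∀ x ∈ A, R x (f x)) →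
      ∀ C : Set X, MeasurableSet C → C ⊆ B → μ (A ∩ f ⁻¹' C) = μ C

/-- The relation `R` is ergodic with respect to `μ`. -/
def IsErgodicRel [MeasurableSpace X] (R : X → X → Prop) (μ : Measure X) : Prop :=
  ∀ A : Set X, MeasurableSet A → (∀ x y, R x y → (x ∈ A ↔ y ∈ A)) → μ A = 0 ∨ μ Aᶜ = 0

/-- The subrelations `R₀` and `R₁` are freely independent: there is no reduced cycle
alternating between nontrivial `R₀`-steps and `R₁`-steps. -/
def FreelyIndepRel (R₀ R₁ : X → X → Prop) : Prop :=
  ¬ ∃ (n : ℕ) (i : ℕ → Fin 2) (x : ℕ → X),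
      2 ≤ n ∧ x n = x 0 ∧ (∀ j < n, x j ≠ x (j + 1)) ∧
      (∀ j, j + 1 < n → i j ≠ i (j + 1)) ∧
      (∀ j < n, if i j = 0 then R₀ (x j) (x (j + 1)) else R₁ (x j) (x (j + 1)))

/-- `R` splits as the free product `R = R₀ ∗ R₁`: `R₀` and `R₁` are freely independent
subequivalence relations generating `R`. -/
def SplitsAs (R R₀ R₁ : X → X → Prop) : Prop :=
  Equivalence R₀ ∧ Equivalence R₁ ∧ (∀ x y, R₀ x y → R x y) ∧ (∀ x y, R₁ x y → R x y) ∧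
    FreelyIndepRel R₀ R₁ ∧
    ∀ x y, R x y ↔ Relation.EqvGen (fun u v => R₀ u v ∨ R₁ u v) x y

/-- The splitting `R = R₀ ∗ R₁` is inessential on the (invariant) set `C`. -/
def InessentialOn [MeasurableSpace X] (R R₀ R₁ : X → X → Prop) (C : Set X) : Prop :=
  ∃ X₀ X₁ : Set X, MeasurableSet X₀ ∧ MeasurableSet X₁ ∧ X₀ ∪ X₁ = C ∧ Disjoint X₀ X₁ ∧
    (∀ x ∈ C, ∀ y ∈ C, R x y → (x ∈ X₀ ↔ y ∈ X₀)) ∧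
    ∃ U₀ U₁ : Set X, MeasurableSet U₀ ∧ MeasurableSet U₁ ∧ U₀ ⊆ X₀ ∧ U₁ ⊆ X₁ ∧
      (∀ x ∈ X₀, ∃ y ∈ U₀, R x y) ∧ (∀ x ∈ X₁, ∃ y ∈ U₁, R x y) ∧
      (∀ x ∈ U₀, ∀ y ∈ U₀, (R x y ↔ R₀ x y)) ∧ (∀ x ∈ U₁, ∀ y ∈ U₁, (R x y ↔ R₁ x y))

/-- The splitting is `μ`-essential: there is no `R`-invariant `μ`-conull Borel set on which
it is inessential. -/
def MuEssential [MeasurableSpace X] (μ : Measure X) (R R₀ R₁ : X → X → Prop) : Prop :=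
  ¬ ∃ C : Set X, MeasurableSet C ∧ μ Cᶜ = 0 ∧ (∀ x y, R x y → (x ∈ C ↔ y ∈ C)) ∧
      InessentialOn R R₀ R₁ C

/-- `R = R₀ ∗ R₁` is a `μ`-essential splitting. -/
def EssentialSplitting [MeasurableSpace X] (μ : Measure X) (R R₀ R₁ : X → X → Prop) : Prop :=
  SplitsAs R R₀ R₁ ∧ MuEssential μ R R₀ R₁

/-- The orbit equivalence relation of an action given by `a`. -/
def orbitRelOf {G : Type} (a : G → X → X) : X → X → Prop := fun x y => ∃ g : G, a g x = y

/-- The restriction of the relation `R` to the set `C` (extended by equality off `C`). -/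
def restrictRel (R : X → X → Prop) (C : Set X) : X → X → Prop :=
  fun x y => x = y ∨ (R x y ∧ x ∈ C ∧ y ∈ C)

/-- `R` is hyperfinite: an increasing union of Borel equivalence relations with finite
classes. -/
def IsHyperfinite [MeasurableSpace X] (R : X → X → Prop) : Prop :=
  ∃ S : ℕ → X → X → Prop,
    (∀ n, Equivalence (S n)) ∧ (∀ n, MeasurableSet {p : X × X | S n p.1 p.2}) ∧
    (∀ n x y, S n x y → S (n + 1) x y) ∧ (∀ n x, {y | S n x y}.Finite) ∧
    ∀ x y, R x y ↔ ∃ n, S n x y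

/-- `R` is `μ`-amenable: off a `μ`-null set it is hyperfinite. -/
def MuAmenableRel [MeasurableSpace X] (R : X → X → Prop) (μ : Measure X) : Prop :=
  ∃ C : Set X, MeasurableSet C ∧ μ Cᶜ = 0 ∧ IsHyperfinite (restrictRel R C)

/-- `R` is `μ`-nowhere amenable: there is no positive measure Borel set on which the
restriction of `R` is amenable. -/
def MuNowhereAmenable [MeasurableSpace X] (R : X → X → Prop) (μ : Measure X) : Prop :=
  ¬ ∃ A : Set X, MeasurableSet A ∧ 0 < μ A ∧
      ∃ C : Set X, MeasurableSet C ∧ C ⊆ A ∧ μ (A \ C) = 0 ∧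
        IsHyperfinite (restrictRel R C)

/-- The symmetric irreflexive graph `E` has no cycles. -/
def HasNoGraphCycles (E : X → X → Prop) : Prop :=
  ¬ ∃ (n : ℕ) (x : ℕ → X), 3 ≤ n ∧ (∀ j < n, E (x j) (x (j + 1))) ∧ x n = x 0 ∧
      ∀ j < n, ∀ k < n, j ≠ k → x j ≠ x k

/-- `R` is treeable: it is generated by a Borel graphing whose connected components are
acyclic. -/
def IsTreeable [MeasurableSpace X] (R : X → X → Prop) : Prop :=
  ∃ E : X → X → Prop,
    MeasurableSet {p : X × X | E p.1 p.2} ∧ (∀ x y, E x y → E y x) ∧ (∀ x, ¬ E x x) ∧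
    (∀ x y, E x y → R x y) ∧ (∀ x y, R x y ↔ Relation.EqvGen E x y) ∧ HasNoGraphCycles E


/-- `Γ` admits an essential measurable splitting: some free p.m.p. action of `Γ` on a
standard probability space has orbit equivalence relation admitting a `μ`-essential
splitting (into Borel subequivalence relations). -/
def AdmitsEssentialMeasurableSplitting (Γ : Type) [Group Γ] : Prop :=
  ∃ S : PmpSystem Γ, S.Free ∧
    ∃ R₀ R₁ : S.X → S.X → Prop,
      letI := S.mX
      MeasurableSet {p : S.X × S.X | R₀ p.1 p.2} ∧
      MeasurableSet {p : S.X × S.X | R₁ p.1 p.2} ∧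
      EssentialSplitting S.μ (orbitRelOf S.act) R₀ R₁


variable {X Y Z : Type}

/-! ### Cocycles and superrigidity -/

/-- A measurable `L`-valued cocycle over the action `a`. -/
def IsCocycle {G L : Type} [Group G] [MeasurableSpace X] [Group L] [MeasurableSpace L]
    (a : G → X → X) (μ : Measure X) (c : G → X → L) : Prop :=
  (∀ g : G, Measurable (c g)) ∧
    ∀ g h : G, ∀ᵐ x ∂μ, c (g * h) x = c g (a h x) * c h x

/-- Two cocycles are cohomologous. -/
def Cohomologous {G L : Type} [Group G] [MeasurableSpace X] [Group L] [MeasurableSpace L]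
    (a : G → X → X) (μ : Measure X) (c₀ c₁ : G → X → L) : Prop :=
  ∃ f : X → L, Measurable f ∧ ∀ g : G, ∀ᵐ x ∂μ, f (a g x) * c₀ g x * (f x)⁻¹ = c₁ g x

/-- The action `a` is `L`-cocycle superrigid: every measurable `L`-valued cocycle is
cohomologous to a group homomorphism. -/
def IsCocycleSuperrigid {G : Type} [Group G] [MeasurableSpace X]
    (L : Type) [Group L] [MeasurableSpace L] (a : G → X → X) (μ : Measure X) : Prop :=
  ∀ c : G → X → L, IsCocycle a μ c →
    ∃ ρ : G →* L, Cohomologous a μ c fun g _ => ρ g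

/-- The action is `𝒢_ctble`-cocycle superrigid: `L`-cocycle superrigid for every countable
discrete group `L`. -/
def IsGctbleCocycleSuperrigid {G : Type} [Group G] [MeasurableSpace X]
    (a : G → X → X) (μ : Measure X) : Prop :=
  ∀ (L : Type) [Group L] [MeasurableSpace L] [MeasurableSingletonClass L],
    Countable L → IsCocycleSuperrigid L a μ

/-- The action is strongly ergodic. -/
def IsStronglyErgodic {G : Type} [Group G] [MeasurableSpace X]
    (a : G → X → X) (μ : Measure X) : Prop :=
  ∀ A : ℕ → Set X, (∀ n, MeasurableSet (A n)) →
    (∀ g : G, Tendsto (fun n => μ (symmDiff (a g '' A n) (A n))) atTop (nhds 0)) →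
    Tendsto (fun n => μ (A n) * μ (A n)ᶜ) atTop (nhds 0)

/-- Soficity of a group. -/
def IsSofic (G : Type) [Group G] : Prop :=
  ∀ (F : Finset G) (ε : ℝ), 0 < ε →
    ∃ (n : ℕ) (σ : G → Equiv.Perm (Fin n)),
      (∀ g ∈ F, ∀ h ∈ F,
        (1 - ε) * n ≤ ((Finset.univ.filter fun i => σ (g * h) i = σ g (σ h i)).card : ℝ)) ∧
      ∀ g ∈ F, g ≠ 1 →
        (1 - ε) * n ≤ ((Finset.univ.filter fun i => σ g i ≠ i).card : ℝ)

/-! ### Internal free products -/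

/-- `Γ` is the internal free product of its subgroups `Λ` and `H`: together they generate
`Γ` and no alternating product of nonidentity elements is the identity. -/
def IsInternalFreeProduct {Γ : Type} [Group Γ] (Λ H : Subgroup Γ) : Prop :=
  Λ ⊔ H = ⊤ ∧
    ∀ (n : ℕ) (w : Fin (n + 1) → Γ) (c : Fin (n + 1) → Bool),
      (∀ i, w i ≠ 1) →
      (∀ i, if c i then w i ∈ Λ else w i ∈ H) →
      (∀ i : Fin n, c i.castSucc ≠ c i.succ) →
      (List.ofFn w).prod ≠ 1





/-! ### Cofinitely equivariant maps -/

/-- `x ∼_B y`: the functions differ in finitely many coordinates, and wherever they differ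
the values lie in the same `B`-orbit. -/
def simRel (β : B → Y → Y) (x y : Γ → Y) : Prop :=
  {γ : Γ | x γ ≠ y γ}.Finite ∧ ∀ γ : Γ, x γ ≠ y γ → ∃ l : B, β l (x γ) = y γ

/-- `φ` is cofinitely equivariant with respect to the given actions of `B` and `C`. -/
def CofinitelyEquivariant [Group Γ] [MeasurableSpace Y] (β : B → Y → Y) (χ : C → Z → Z)
    (νΓ : Measure (Γ → Y)) (φ : (Γ → Y) → (Γ → Z)) : Prop :=
  ∀ᵐ y ∂νΓ, ∀ x : Γ → Y, simRel β x y → ∀ γ : Γ,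
    simRel χ (φ (shiftS γ x)) (shiftS γ (φ y))

/-- `φ` (with a.e. inverse `ψ`) is a bi-cofinitely equivariant measure space isomorphism. -/
def BiCofinitelyEquivariant [Group Γ] [MeasurableSpace Y] [MeasurableSpace Z]
    (β : B → Y → Y) (χ : C → Z → Z) (νΓ : Measure (Γ → Y)) (ηΓ : Measure (Γ → Z))
    (φ : (Γ → Y) → (Γ → Z)) (ψ : (Γ → Z) → (Γ → Y)) : Prop :=
  MeasurePreserving φ νΓ ηΓ ∧ Measurable ψ ∧
    (∀ᵐ y ∂νΓ, ψ (φ y) = y) ∧ (∀ᵐ z ∂ηΓ, φ (ψ z) = z) ∧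
    CofinitelyEquivariant β χ νΓ φ ∧ CofinitelyEquivariant χ β ηΓ ψ

/-! ### Stable orbit equivalence -/

/-- The actions `a` and `b` are stably orbit equivalent. -/
def StablyOrbitEquivalent {G H : Type} [MeasurableSpace X] [MeasurableSpace Y]
    (a : G → X → X) (b : H → Y → Y) (μ : Measure X) (ν : Measure Y) : Prop :=
  ∃ (X₀ : Set X) (Y₀ : Set Y) (φ : X → Y),
    MeasurableSet X₀ ∧ MeasurableSet Y₀ ∧ 0 < μ X₀ ∧ 0 < ν Y₀ ∧
    (∀ᵐ x ∂μ.restrict X₀, φ x ∈ Y₀) ∧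
    MeasurePreserving φ ((μ X₀)⁻¹ • μ.restrict X₀) ((ν Y₀)⁻¹ • ν.restrict Y₀) ∧
    (∃ ψ : Y → X, Measurable ψ ∧ (∀ᵐ x ∂μ.restrict X₀, ψ (φ x) = x) ∧
      (∀ᵐ y ∂ν.restrict Y₀, φ (ψ y) = y)) ∧
    ∀ᵐ x ∂μ.restrict X₀,
      (∀ g : G, a g x ∈ X₀ → ∃ h : H, φ (a g x) = b h (φ x)) ∧
      (∀ h : H, b h (φ x) ∈ Y₀ → ∃ g : G, a g x ∈ X₀ ∧ φ (a g x) = b h (φ x))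

/-! Suppose `S ⊆ Γ` is infinite, co-infinite and almost invariant, and fix `A ⊆ X` with
`0 < μ A < 1` and `ℓ ≠ 1` in `L`. Counting the coordinates of `x` in `S` that land in `A` gives an
infinite sum whose formal coboundary `e(γ, x)` is a finite sum, hence an honest `ℤ`-valued
cocycle, and `ℓ ^ e` is an `L`-valued cocycle. Suppose `ℓ ^ e(γ, x) = f(γ x)⁻¹ ρ(γ) f(x)`.
Approximate `f` in measure by a function `g` of finitely many coordinates, then choose
`δ₀ ∈ S` and `γ` with `γ δ₀ ∉ S` and neither `δ₀` nor `γ δ₀` seen by `g`. The right-hand side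
is then close to `g(γ x)⁻¹ ρ(γ) g(x)`, which does not depend on `x δ₀`, whereas the left-hand
side gets multiplied by `ℓ⁻¹` when `x δ₀` enters `A`. As `x δ₀` is independent of the other
coordinates, some `x` puts both `ℓ ^ n` and `ℓ⁻¹ * ℓ ^ n` close to the same point, although
bi-invariance keeps them `dist ℓ 1` apart. -/

open ProbabilityTheory
open scoped symmDiff

section Cylinders

variable {ι : Type*} {X : ι → Type*} [∀ i, MeasurableSpace (X i)]

lemma exists_measurableSet_cylinderEvents_symmDiff_lt (P : Measure (∀ i, X i))
    [IsFiniteMeasure P] {B : Set (∀ i, X i)} (hB : MeasurableSet B) {ε : ℝ≥0∞} (hε : 0 < ε) :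
    ∃ s : Finset ι, ∃ U, MeasurableSet[cylinderEvents s] U ∧ P (U ∆ B) < ε := by
  obtain ⟨U, hU, hUB⟩ := exists_measure_symmDiff_lt_of_generateFrom_isSetRing (μ := P)
    isSetRing_measurableCylinders
    ⟨{univ}, countable_singleton _, by simpa using ⟨∅, univ, .univ, rfl⟩, by simp⟩
    generateFrom_measurableCylinders.symm hB hε
  obtain ⟨s, S, hS, rfl⟩ := (mem_measurableCylinders U).mp hU
  exact ⟨s, _, measurable_restrict_cylinderEvents (s : Set ι) hS, hUB⟩

lemma exists_measure_le_apply_lt {Ω : Type*} [MeasurableSpace Ω] (P : Measure Ω)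
    [IsFiniteMeasure P] {k : Ω → ℕ} (hk : Measurable k) {η : ℝ≥0∞} (hη : 0 < η) :
    ∃ N, P {x | N ≤ k x} < η := by
  have h := tendsto_measure_iInter_atTop (μ := P) (s := fun N => {x | N ≤ k x})
    (fun N => (measurableSet_le measurable_const hk).nullMeasurableSet)
    (fun _ _ hNM _ hx => le_trans hNM hx) ⟨0, measure_ne_top _ _⟩
  have hempty : (⋂ N, {x | N ≤ k x}) = ∅ :=
    eq_empty_of_forall_notMem fun x hx => absurd (mem_iInter.mp hx (k x + 1)) (by simp)
  rw [hempty, measure_empty] at h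
  exact (h.eventually_lt_const hη).exists

lemma exists_measurable_cylinderEvents_measure_ne_lt (P : Measure (∀ i, X i))
    [IsFiniteMeasure P] {k : (∀ i, X i) → ℕ} (hk : Measurable k) {η : ℝ≥0∞} (hη : 0 < η) :
    ∃ s : Finset ι, ∃ k' : (∀ i, X i) → ℕ, Measurable[cylinderEvents s] k' ∧
      P {x | k' x ≠ k x} < η := by
  classical
  obtain ⟨N, hN⟩ := exists_measure_le_apply_lt P hk (ENNReal.half_pos hη.ne')
  obtain ⟨δ, hδ0, hδ⟩ := ENNReal.exists_pos_sum_of_countable' (ENNReal.half_pos hη.ne').ne' ℕ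
  choose s U hU hUk using fun n =>
    exists_measurableSet_cylinderEvents_symmDiff_lt P (measurableSet_eq_fun hk measurable_const)
      (hδ0 n) (B := {x | k x = n})
  -- `k'` is the first `n < N` whose approximating set `U n` contains `x`, and `N` if there is none.
  have hex : ∀ x, ∃ n, N ≤ n ∨ x ∈ U n := fun x => ⟨N, Or.inl le_rfl⟩
  refine ⟨(Finset.range N).biUnion s, fun x => Nat.find (hex x), measurable_find _ fun n => ?_, ?_⟩
  · by_cases hn : N ≤ n
    · simp [hn]
    · simp only [hn, false_or, ofPred_mem_eq]
      exact cylinderEvents_mono (Finset.subset_biUnion_of_mem s (by simpa using hn)) _ (hU n)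
  have hsub : {x | Nat.find (hex x) ≠ k x} ⊆
      {x | N ≤ k x} ∪ ⋃ n ∈ Finset.range N, U n ∆ {x | k x = n} := by
    intro x hx
    by_contra hcon
    simp only [mem_union, mem_ofPred_eq, mem_iUnion, Finset.mem_range, not_or, not_exists,
      not_le] at hcon
    obtain ⟨hkN, hgood⟩ := hcon
    have hmem : ∀ n < N, (x ∈ U n ↔ k x = n) := fun n hn => by
      have := hgood n hn
      simp only [mem_symmDiff, mem_ofPred_eq, not_or, not_and, not_not] at this
      tauto
    refine hx ((Nat.find_eq_iff _).mpr ⟨Or.inr ((hmem _ hkN).mpr rfl), fun n hn => ?_⟩)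
    rw [not_or, hmem n (hn.trans hkN)]
    omega
  calc P {x | Nat.find (hex x) ≠ k x}
      ≤ P {x | N ≤ k x} + ∑ n ∈ Finset.range N, P (U n ∆ {x | k x = n}) :=
        (measure_mono hsub).trans ((measure_union_le _ _).trans
          (add_le_add le_rfl (measure_biUnion_finset_le _ _)))
    _ ≤ P {x | N ≤ k x} + ∑' n, δ n :=
        add_le_add le_rfl ((Finset.sum_le_sum fun n _ => (hUk n).le).trans
          (ENNReal.sum_le_tsum _))
    _ < η / 2 + η / 2 := ENNReal.add_lt_add hN hδ
    _ = η := ENNReal.add_halves η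

lemma exists_measurable_cylinderEvents_measure_le_dist_lt {M : Type*} [PseudoMetricSpace M]
    [TopologicalSpace.SeparableSpace M] [Nonempty M] [MeasurableSpace M] [OpensMeasurableSpace M]
    (P : Measure (∀ i, X i)) [IsFiniteMeasure P] {f : (∀ i, X i) → M} (hf : Measurable f)
    {ε : ℝ} (hε : 0 < ε) {η : ℝ≥0∞} (hη : 0 < η) :
    ∃ s : Finset ι, ∃ g : (∀ i, X i) → M, Measurable[cylinderEvents s] g ∧
      P {x | ε ≤ dist (f x) (g x)} < η := by
  set b := TopologicalSpace.denseSeq M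
  have hex : ∀ x, ∃ n, dist (f x) (b n) < ε := fun x =>
    Metric.denseRange_iff.mp (TopologicalSpace.denseRange_denseSeq M) (f x) ε hε
  obtain ⟨s, k', hk', hk'P⟩ := exists_measurable_cylinderEvents_measure_ne_lt P
    (measurable_find hex fun n => measurableSet_lt (hf.dist measurable_const) measurable_const) hη
  refine ⟨s, b ∘ k', measurable_from_nat.comp hk', (measure_mono fun x hx => ?_).trans_lt hk'P⟩
  intro hkx
  have h := Nat.find_spec (hex x)
  rw [← hkx] at h
  exact (not_lt.mpr hx) h

lemma indep_cylinderEvents_infinitePi (μ : ∀ i, Measure (X i)) [∀ i, IsProbabilityMeasure (μ i)]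
    {S T : Set ι} (h : Disjoint S T) :
    Indep (cylinderEvents S) (cylinderEvents T) (Measure.infinitePi μ) :=
  indep_iSup_of_disjoint (fun i => (measurable_pi_apply i).comap_le)
    ((iIndepFun_iff_iIndep _ _ _).mp
      (iIndepFun_infinitePi (X := fun _ => id) fun _ => measurable_id)) h

end Cylinders

section Shift

variable {Γ V X : Type} [Group Γ] [MulAction Γ V] [MeasurableSpace X]

lemma IsProductMeasure.eq_infinitePi {μ : Measure X} [IsProbabilityMeasure μ]
    {P : Measure (V → X)} (h : IsProductMeasure μ P) : P = Measure.infinitePi fun _ => μ :=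
  Measure.eq_infinitePi _ h.2

lemma measurePreserving_shiftS_infinitePi (μ : Measure X) [IsProbabilityMeasure μ] (γ : Γ) :
    MeasurePreserving (shiftS γ : (V → X) → (V → X)) (Measure.infinitePi fun _ => μ)
      (Measure.infinitePi fun _ => μ) := by
  have h : (shiftS γ : (V → X) → (V → X)) =
      MeasurableEquiv.piCongrLeft (fun _ => X) (MulAction.toPerm γ) := by
    ext x v
    simp [shiftS, MeasurableEquiv.piCongrLeft, Equiv.piCongrLeft_apply]
  rw [h]
  exact ⟨by fun_prop, Measure.infinitePi_map_piCongrLeft (fun _ : V => μ) (MulAction.toPerm γ)⟩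

lemma measurable_shiftS_cylinderEvents_compl (γ : Γ) {T : Set V} {i₀ : V} (h : γ • i₀ ∉ T) :
    Measurable[cylinderEvents {i₀}ᶜ, cylinderEvents T] (shiftS γ : (V → X) → (V → X)) := by
  refine measurable_cylinderEvents_iff.mpr fun i hi => measurable_cylinderEvent_apply ?_
  rintro (hi₀ : γ⁻¹ • i = i₀)
  rw [← hi₀, smul_inv_smul] at h
  exact h hi

end Shift

lemma exists_measurableSet_measure_ne_zero_compl_ne_zero {X : Type*} [MeasurableSpace X]
    [MeasurableSpace.CountablySeparated X] [MeasurableSingletonClass X] {μ : Measure X}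
    [IsProbabilityMeasure μ] (hμ : ¬ ∃ x, μ {x} = 1) :
    ∃ A, MeasurableSet A ∧ μ A ≠ 0 ∧ μ Aᶜ ≠ 0 := by
  by_contra! h
  have : Nonempty X := nonempty_of_isProbabilityMeasure μ
  obtain ⟨x, hx⟩ := Filter.exists_singleton_mem_of_forall_separating (l := ae μ) MeasurableSet
    fun U hU => by
      by_cases hU0 : μ U = 0
      · exact Or.inr (by simpa [mem_ae_iff] using hU0)
      · exact Or.inl (mem_ae_iff.mpr (h U hU hU0))
  exact hμ ⟨x, (prob_compl_eq_zero_iff (measurableSet_singleton x)).mp (mem_ae_iff.mp hx)⟩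

section WeightedSum

variable {ι X : Type}

noncomputable def weightedSum (w : ι → ℤ) (a : X → ℤ) (x : ι → X) : ℤ := ∑ᶠ i, w i * a (x i)

lemma weightedSum_add {w w' : ι → ℤ} (hw : (support w).Finite) (hw' : (support w').Finite)
    (a : X → ℤ) (x : ι → X) :
    weightedSum (w + w') a x = weightedSum w a x + weightedSum w' a x := by
  simp only [weightedSum, Pi.add_apply, add_mul]
  exact finsum_add_distrib (hw.subset (support_mul_subset_left _ _))
    (hw'.subset (support_mul_subset_left _ _))

lemma weightedSum_shiftS {Γ : Type} [Group Γ] [MulAction Γ ι] (w : ι → ℤ) (a : X → ℤ)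
    (γ : Γ) (x : ι → X) :
    weightedSum w a (shiftS γ x) = weightedSum (fun i => w (γ • i)) a x := by
  simp only [weightedSum, shiftS]
  rw [← finsum_comp_equiv (MulAction.toPerm γ)]
  simp

lemma weightedSum_eq_add_update [DecidableEq ι] {w : ι → ℤ} (hw : (support w).Finite)
    (a : X → ℤ) (x : ι → X) (i₀ : ι) :
    weightedSum w a x = w i₀ * a (x i₀) + weightedSum (update w i₀ 0) a x := by
  have hsplit : w = Pi.single i₀ (w i₀) + update w i₀ 0 := by
    ext i
    by_cases hi : i = i₀ <;> simp [hi]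
  conv_lhs => rw [hsplit]
  rw [weightedSum_add ((finite_singleton i₀).subset Pi.support_single_subset)
    (hw.subset (by simp [support_update_zero]))]
  congr 1
  rw [weightedSum, finsum_eq_single _ i₀ fun i hi => by simp [hi]]
  simp

lemma measurable_weightedSum [MeasurableSpace X] {w : ι → ℤ} (hw : (support w).Finite)
    {T : Set ι} (hT : support w ⊆ T) {a : X → ℤ} (ha : Measurable a) :
    Measurable[cylinderEvents T] (weightedSum w a) := by
  have h : weightedSum w a = fun x => ∑ i ∈ hw.toFinset, w i * a (x i) := by
    ext x
    exact finsum_eq_sum_of_support_subset _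
      ((support_mul_subset_left _ _).trans hw.coe_toFinset.ge)
  rw [h]
  refine Finset.measurable_sum _ fun i hi => ?_
  exact measurable_from_top.comp
    (ha.comp (measurable_cylinderEvent_apply (hT (hw.mem_toFinset.mp hi))))

end WeightedSum

section Coboundary

variable {Γ ι X : Type} [Group Γ] [MulAction Γ ι]

/-- The formal coboundary `γ ↦ F ∘ shiftS γ - F` of the (generally divergent) sum
`F x = ∑ i, ψ i * a (x i)`. -/
noncomputable def coboundarySum (ψ : ι → ℤ) (a : X → ℤ) (γ : Γ) : (ι → X) → ℤ :=
  weightedSum (fun i => ψ (γ • i) - ψ i) a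

lemma coboundarySum_mul {ψ : ι → ℤ} (hψ : ∀ γ : Γ, (support fun i => ψ (γ • i) - ψ i).Finite)
    (a : X → ℤ) (g h : Γ) (x : ι → X) :
    coboundarySum ψ a (g * h) x = coboundarySum ψ a g (shiftS h x) + coboundarySum ψ a h x := by
  have hsplit : (fun i => ψ ((g * h) • i) - ψ i) =
      (fun i => ψ (g • h • i) - ψ (h • i)) + fun i => ψ (h • i) - ψ i := by
    ext i
    simp [mul_smul]
  have hfin : (support fun i => ψ (g • h • i) - ψ (h • i)).Finite :=
    (hψ g).preimage (f := (h • ·)) (MulAction.injective h).injOn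
  rw [coboundarySum, hsplit, weightedSum_add hfin (hψ h), coboundarySum, weightedSum_shiftS]
  rfl

lemma measurable_coboundarySum [MeasurableSpace X] {ψ : ι → ℤ} {γ : Γ}
    (hψ : (support fun i => ψ (γ • i) - ψ i).Finite) {a : X → ℤ} (ha : Measurable a) :
    Measurable (coboundarySum ψ a γ) := by
  have h := measurable_weightedSum hψ (subset_univ _) ha
  rwa [cylinderEvents_univ] at h

lemma exists_coboundarySum_eq_add [MeasurableSpace X] {ψ : ι → ℤ} {γ : Γ}
    (hψ : (support fun i => ψ (γ • i) - ψ i).Finite) {a : X → ℤ} (ha : Measurable a) (i₀ : ι) :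
    ∃ e : (ι → X) → ℤ, Measurable[cylinderEvents {i₀}ᶜ] e ∧
      ∀ x, coboundarySum ψ a γ x = (ψ (γ • i₀) - ψ i₀) * a (x i₀) + e x := by
  classical
  have hsupp := support_update_zero (fun i => ψ (γ • i) - ψ i) i₀
  exact ⟨_, measurable_weightedSum (hψ.subset (hsupp ▸ sdiff_subset))
    (hsupp ▸ fun _ hi => hi.2) ha, fun x => weightedSum_eq_add_update hψ a x i₀⟩

lemma finite_support_indicator_smul_sub {S : Set Γ}
    (hS : ∀ γ : Γ, (symmDiff ((γ * ·) '' S) S).Finite) (γ : Γ) :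
    (support fun δ => S.indicator (1 : Γ → ℤ) (γ • δ) - S.indicator 1 δ).Finite := by
  refine (hS γ⁻¹).subset fun δ hδ => ?_
  by_cases h₁ : γ * δ ∈ S <;> by_cases h₂ : δ ∈ S <;>
    simp_all [mem_symmDiff, indicator]

lemma isCocycle_zpow {G Ω L : Type} [Group G] [MeasurableSpace Ω] [Group L] [MeasurableSpace L]
    {a : G → Ω → Ω} (μ : Measure Ω) {e : G → Ω → ℤ} (hm : ∀ g, Measurable (e g))
    (he : ∀ g h x, e (g * h) x = e g (a h x) + e h x) (ℓ : L) :
    IsCocycle a μ fun g x => ℓ ^ e g x :=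
  ⟨fun g => measurable_from_top.comp (hm g),
    fun g h => ae_of_all _ fun x => by simp only [he, zpow_add]⟩

end Coboundary

section BiInvariant

variable {L : Type*} [Group L] [PseudoMetricSpace L]

lemma isIsometricSMul_of_dist_mul_mul
    (hbi : ∀ g h x y : L, dist (g * x * h) (g * y * h) = dist x y) :
    IsIsometricSMul L L ∧ IsIsometricSMul Lᵐᵒᵖ L :=
  ⟨⟨fun g => Isometry.of_dist_eq fun x y => by simpa using hbi g 1 x y⟩,
    ⟨fun g => Isometry.of_dist_eq fun x y => by simpa using hbi 1 g.unop x y⟩⟩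

variable [IsIsometricSMul L L] [IsIsometricSMul Lᵐᵒᵖ L]

lemma dist_mul_mul_le_add (a b c d : L) : dist (a * b) (c * d) ≤ dist a c + dist b d :=
  calc dist (a * b) (c * d) ≤ dist (a * b) (c * b) + dist (c * b) (c * d) := dist_triangle ..
    _ = dist a c + dist b d := by rw [dist_mul_right, dist_mul_left]

variable (L) in
lemma isTopologicalGroup_of_isIsometricSMul : IsTopologicalGroup L where
  continuous_mul := LipschitzWith.continuous (K := 2) <| .of_dist_le_mul fun p q => by
    calc dist (p.1 * p.2) (q.1 * q.2) ≤ dist p.1 q.1 + dist p.2 q.2 := dist_mul_mul_le_add ..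
      _ ≤ 2 * dist p q := by
        rw [Prod.dist_eq]; linarith [le_max_left (dist p.1 q.1) (dist p.2 q.2),
          le_max_right (dist p.1 q.1) (dist p.2 q.2)]
  continuous_inv := isometry_inv.continuous

lemma measure_le_dist_inv_mul_mul_lt {Ω : Type*} [MeasurableSpace Ω] {P : Measure Ω}
    {T : Ω → Ω} (hT : MeasurePreserving T P P) {f g c : Ω → L} {l : L}
    (hcoh : ∀ᵐ x ∂P, f (T x) * c x * (f x)⁻¹ = l) {ε : ℝ} {η : ℝ≥0∞}
    (hm : NullMeasurableSet {x | ε ≤ dist (f x) (g x)} P)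
    (hfg : P {x | ε ≤ dist (f x) (g x)} < η) :
    P {x | ε + ε ≤ dist (c x) ((g (T x))⁻¹ * l * g x)} < η + η := by
  set B := {x | ε ≤ dist (f x) (g x)}
  have hsub : {x | ε + ε ≤ dist (c x) ((g (T x))⁻¹ * l * g x)} ⊆
      {x | f (T x) * c x * (f x)⁻¹ ≠ l} ∪ (B ∪ T ⁻¹' B) := by
    intro x hx
    by_contra! hgood
    simp only [mem_union, mem_ofPred_eq, not_or, not_not, mem_preimage, B, not_le] at hgood
    obtain ⟨hx₁, hx₂, hx₃⟩ := hgood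
    have hc : c x = (f (T x))⁻¹ * l * f x := by rw [← hx₁]; group
    rw [mem_ofPred_eq] at hx
    refine hx.not_gt ?_
    calc dist (c x) ((g (T x))⁻¹ * l * g x)
        ≤ dist ((f (T x))⁻¹ * l) ((g (T x))⁻¹ * l) + dist (f x) (g x) := by
          rw [hc]; exact dist_mul_mul_le_add ..
      _ < ε + ε := by rw [dist_mul_right, dist_inv_inv]; exact add_lt_add hx₃ hx₂
  calc P {x | ε + ε ≤ dist (c x) ((g (T x))⁻¹ * l * g x)}
      ≤ P {x | f (T x) * c x * (f x)⁻¹ ≠ l} + (P B + P (T ⁻¹' B)) :=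
        (measure_mono hsub).trans ((measure_union_le _ _).trans
          (add_le_add le_rfl (measure_union_le _ _)))
    _ < η + η := by
      rw [ae_iff.mp hcoh, zero_add, hT.measure_preimage hm]
      exact ENNReal.add_lt_add hfg hfg

end BiInvariant

lemma nonempty_compl_union_of_indep {Ω : Type*} {m₁ m₂ mΩ : MeasurableSpace Ω}
    {P : Measure Ω} [IsProbabilityMeasure P] (hind : Indep m₁ m₂ P) (hle : m₁ ≤ mΩ)
    {E B₀ B₁ : Set Ω} (hE : MeasurableSet[m₁] E) (hB₀ : MeasurableSet[m₂] B₀)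
    (hB₁ : MeasurableSet[m₂] B₁) (h : P (E ∩ B₁ ∪ Eᶜ ∩ B₀) < P E * P Eᶜ) :
    (B₀ ∪ B₁)ᶜ.Nonempty := by
  rw [Indep_iff] at hind
  have h₁ : P E * P B₁ < P E * P Eᶜ := by
    rw [← hind _ _ hE hB₁]; exact (measure_mono subset_union_left).trans_lt h
  have h₀ : P Eᶜ * P B₀ < P Eᶜ * P E := by
    rw [← hind _ _ hE.compl hB₀, mul_comm]; exact (measure_mono subset_union_right).trans_lt h
  have hB : P B₀ + P B₁ < 1 := calc
    P B₀ + P B₁ < P E + P Eᶜ :=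
      ENNReal.add_lt_add (lt_of_mul_lt_mul_left' h₀) (lt_of_mul_lt_mul_left' h₁)
    _ = 1 := prob_add_prob_compl (hle _ hE)
  refine nonempty_of_measure_ne_zero (μ := P) fun h0 => (hB.trans_le ?_).false
  calc (1 : ℝ≥0∞) = P univ := measure_univ.symm
    _ ≤ P (B₀ ∪ B₁) + P (B₀ ∪ B₁)ᶜ := measure_univ_le_add_compl _
    _ ≤ P B₀ + P B₁ := by rw [h0, add_zero]; exact measure_union_le _ _

lemma exists_dist_lt_of_measure_le_dist_lt {ι X M : Type*} [MeasurableSpace X] {μ : Measure X}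
    [IsProbabilityMeasure μ] [PseudoMetricSpace M] [SecondCountableTopology M] [MeasurableSpace M]
    [OpensMeasurableSpace M] {i₀ : ι} {A : Set X} (hA : MeasurableSet A)
    {h u v G : (ι → X) → M} (hu : Measurable[cylinderEvents {i₀}ᶜ] u)
    (hv : Measurable[cylinderEvents {i₀}ᶜ] v) (hG : Measurable[cylinderEvents {i₀}ᶜ] G)
    (hhu : ∀ x, x i₀ ∈ A → h x = u x) (hhv : ∀ x, x i₀ ∉ A → h x = v x) {r : ℝ}
    (hr : Measure.infinitePi (fun _ => μ) {x | r ≤ dist (h x) (G x)} < μ A * μ Aᶜ) :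
    ∃ x, dist (u x) (v x) < r + r := by
  set P := Measure.infinitePi fun _ : ι => μ
  have hE : ∀ {B : Set X}, MeasurableSet B → P {x | x i₀ ∈ B} = μ B := fun hB =>
    (measurePreserving_eval_infinitePi _ i₀).measure_preimage hB.nullMeasurableSet
  have hEm : MeasurableSet[cylinderEvents {i₀}] {x : ι → X | x i₀ ∈ A} :=
    measurable_cylinderEvent_apply (X := fun _ : ι => X) (mem_singleton i₀) hA
  have hbad : P ({x | x i₀ ∈ A} ∩ {x | r ≤ dist (u x) (G x)} ∪
      {x | x i₀ ∈ A}ᶜ ∩ {x | r ≤ dist (v x) (G x)}) < P {x | x i₀ ∈ A} * P {x | x i₀ ∈ A}ᶜ := by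
    rw [hE hA, show P {x | x i₀ ∈ A}ᶜ = μ Aᶜ from hE hA.compl]
    refine (measure_mono fun x hx => ?_).trans_lt hr
    rcases hx with ⟨hxA, hx⟩ | ⟨hxA, hx⟩
    · simpa [hhu x hxA] using hx
    · simpa [hhv x hxA] using hx
  obtain ⟨x, hx⟩ := nonempty_compl_union_of_indep (m₂ := cylinderEvents {i₀}ᶜ)
    (indep_cylinderEvents_infinitePi _ (disjoint_compl_right (a := {i₀}))) cylinderEvents_le_pi
    hEm (measurable_dist.comp (hv.prodMk hG) measurableSet_Ici)
    (measurable_dist.comp (hu.prodMk hG) measurableSet_Ici) hbad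
  simp only [compl_union, mem_inter_iff, mem_compl_iff, mem_preimage, comp_apply, mem_Ici,
    not_le] at hx
  exact ⟨x, (dist_triangle_right _ _ (G x)).trans_lt (add_lt_add hx.2 hx.1)⟩

theorem not_cohomologous_zpow_coboundarySum {Γ X L : Type} [Group Γ] [MeasurableSpace X]
    {μ : Measure X} [IsProbabilityMeasure μ] [Group L] [MetricSpace L]
    [SecondCountableTopology L] [MeasurableSpace L] [BorelSpace L] [IsIsometricSMul L L]
    [IsIsometricSMul Lᵐᵒᵖ L] {S : Set Γ} (hS : ∀ γ : Γ, (symmDiff ((γ * ·) '' S) S).Finite)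
    (hSinf : S.Infinite) (hScinf : Sᶜ.Infinite) {A : Set X} (hA : MeasurableSet A)
    (hA₀ : μ A ≠ 0) (hA₁ : μ Aᶜ ≠ 0) {ℓ : L} (hℓ : ℓ ≠ 1) (ρ : Γ → L) :
    ¬ Cohomologous shiftS (Measure.infinitePi fun _ : Γ => μ)
      (fun γ x => ℓ ^ coboundarySum (S.indicator 1) (A.indicator 1) γ x) fun γ _ => ρ γ := by
  rintro ⟨f, hf, hcoh⟩
  have := isTopologicalGroup_of_isIsometricSMul L
  set ε := dist ℓ 1 / 4 with hε_def
  have hε : 0 < ε := by have := dist_pos.mpr hℓ; positivity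
  obtain ⟨s, g, hg, hfg⟩ := exists_measurable_cylinderEvents_measure_le_dist_lt
    (Measure.infinitePi fun _ : Γ => μ) hf hε (ENNReal.half_pos (mul_ne_zero hA₀ hA₁))
  obtain ⟨δ₀, hδ₀S, hδ₀s⟩ := (hSinf.sdiff s.finite_toSet).nonempty
  obtain ⟨t, htS, hts⟩ := (hScinf.sdiff s.finite_toSet).nonempty
  set γ := t * δ₀⁻¹
  obtain ⟨e', he', hsplit⟩ := exists_coboundarySum_eq_add (finite_support_indicator_smul_sub hS γ)
    (measurable_one.indicator hA) δ₀
  have hγδ₀ : γ • δ₀ = t := by simp [γ]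
  have hw : S.indicator (1 : Γ → ℤ) (γ • δ₀) - S.indicator 1 δ₀ = -1 := by
    rw [hγδ₀, indicator_of_notMem htS, indicator_of_mem hδ₀S]
    rfl
  have hG : Measurable[cylinderEvents {δ₀}ᶜ] fun x => (g (shiftS γ x))⁻¹ * ρ γ * g x :=
    ((hg.comp (measurable_shiftS_cylinderEvents_compl γ (hγδ₀ ▸ hts))).inv.mul_const _).mul
      (hg.mono (cylinderEvents_mono (subset_compl_singleton_iff.mpr hδ₀s)) le_rfl)
  have hclose := measure_le_dist_inv_mul_mul_lt (measurePreserving_shiftS_infinitePi μ γ)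
    (hcoh γ) (measurableSet_le measurable_const
      (hf.dist (hg.mono cylinderEvents_le_pi le_rfl))).nullMeasurableSet hfg
  rw [ENNReal.add_halves] at hclose
  obtain ⟨x, hx⟩ := exists_dist_lt_of_measure_le_dist_lt hA (i₀ := δ₀)
    (u := fun x => ℓ⁻¹ * ℓ ^ e' x) (v := fun x => ℓ ^ e' x)
    ((measurable_from_top (f := fun n : ℤ => ℓ⁻¹ * ℓ ^ n)).comp he')
    ((measurable_from_top (f := fun n : ℤ => ℓ ^ n)).comp he') hG
    (fun x hx => by simp only [hsplit, hw]; simp [hx, zpow_add])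
    (fun x hx => by simp [hsplit, hx]) hclose
  have hdist : dist (ℓ⁻¹ * ℓ ^ e' x) (ℓ ^ e' x) = dist ℓ 1 := calc
    _ = dist (ℓ⁻¹ * ℓ ^ e' x) (1 * ℓ ^ e' x) := by rw [one_mul]
    _ = dist ℓ 1 := by rw [dist_mul_right, ← dist_inv_inv, inv_inv, inv_one]
  linarith [hε_def]

theorem at_most_one_end_of_bernoulli_cocycle_superrigid_general
    (Γ : Type) [Group Γ]
    (X : Type) [MeasurableSpace X] [StandardBorelSpace X] (μ : Measure X)
    [IsProbabilityMeasure μ] (hnd : ¬ ∃ x : X, μ {x} = 1)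
    (L : Type) [Group L] [MetricSpace L] [PolishSpace L] [MeasurableSpace L] [BorelSpace L]
    [Nontrivial L]
    (hbi : ∀ g h x y : L, dist (g * x * h) (g * y * h) = dist x y)
    (μΓ : Measure (Γ → X)) (hμΓ : IsProductMeasure μ μΓ)
    (hsr : IsCocycleSuperrigid L (shiftS : Γ → (Γ → X) → (Γ → X)) μΓ) :
    ∀ S : Set Γ, (∀ γ : Γ, (symmDiff ((γ * ·) '' S) S).Finite) → S.Finite ∨ Sᶜ.Finite := by
  intro S hS
  by_contra! hinf
  obtain ⟨A, hA, hA₀, hA₁⟩ := exists_measurableSet_measure_ne_zero_compl_ne_zero hnd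
  obtain ⟨ℓ, hℓ⟩ := exists_ne (1 : L)
  obtain ⟨_, _⟩ := isIsometricSMul_of_dist_mul_mul hbi
  obtain rfl := hμΓ.eq_infinitePi
  have hψ := finite_support_indicator_smul_sub hS
  obtain ⟨ρ, hρ⟩ := hsr _ (isCocycle_zpow _
    (fun γ => measurable_coboundarySum (hψ γ) (measurable_one.indicator hA))
    (coboundarySum_mul hψ _) ℓ)
  exact not_cohomologous_zpow_coboundarySum hS hinf.1 hinf.2 hA hA₀ hA₁ hℓ ρ hρ

/-- If the Bernoulli shift of `Γ` over a non-point-mass base is `L`-cocycle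
superrigid for some nontrivial Polish group `L` with a compatible bi-invariant metric, then
`Γ` has at most one end: every almost invariant subset of `Γ` is finite or cofinite. -/
theorem at_most_one_end_of_bernoulli_cocycle_superrigid
    (Γ : Type) [Group Γ] [Countable Γ]
    (X : Type) [MeasurableSpace X] [StandardBorelSpace X] (μ : Measure X)
    [IsProbabilityMeasure μ] (hnd : ¬ ∃ x : X, μ {x} = 1)
    (L : Type) [Group L] [MetricSpace L] [PolishSpace L] [MeasurableSpace L] [BorelSpace L]
    [Nontrivial L]
    (hbi : ∀ g h x y : L, dist (g * x * h) (g * y * h) = dist x y)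
    (μΓ : Measure (Γ → X)) (hμΓ : IsProductMeasure μ μΓ)
    (hsr : IsCocycleSuperrigid L (shiftS : Γ → (Γ → X) → (Γ → X)) μΓ) :
    ∀ S : Set Γ, (∀ γ : Γ, (symmDiff ((γ * ·) '' S) S).Finite) → S.Finite ∨ Sᶜ.Finite :=
  at_most_one_end_of_bernoulli_cocycle_superrigid_general Γ X μ hnd L hbi μΓ hμΓ hsr

end OEW
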